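/- Let K and K' be admissible d-complexes on disjoint finite vertex sets S and S', let K ⊔ K' be their disjoint union, and let α be any integral (d+1)-chain on S ⊔ S' with ∂α = K ⊔ K' and |α|₁ = V_ℤ(K ⊔ K'). Then every oriented (d+1)-simplex appearing in α with nonzero coefficient falls into one of the following cases: all its vertices lie in S; all its vertices lie in S'; all its vertices lie in S except for exactly one vertex in S'; or all its vertices lie in S' except for exactly one vertex in S. -/

import Mathlib

/-!
Framework: oriented simplicial chains on a finite vertex set.

An oriented `n`-simplex on a vertex set `V` is an `(n+1)`-tuple of distinct vertices
up to even permutation; an odd permutation yields the oppositely oriented simplex.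
An `n`-chain with coefficients in `R` is encoded as an *alternating* function
`c : (Fin (n+1) → V) → R`: the value `c f` is the coefficient of the oriented
simplex represented by the tuple `f`, and reversing orientation negates it.
-/

/-- `c` is an `n`-chain: it is alternating under permutations of the tuple
(so an oriented simplex and its orientation reversal are identified up to sign). -/
def IsAltChain {V : Type*} (n : ℕ) {R : Type*} [AddCommGroup R]
    (c : (Fin (n + 1) → V) → R) : Prop :=
  ∀ (σ : Equiv.Perm (Fin (n + 1))) (f : Fin (n + 1) → V),
    c (f ∘ σ) = (Equiv.Perm.sign σ : ℤ) • c f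

/-- The boundary operator: `∂` sends `[v₀,…,vₙ]` to `Σᵢ (−1)ⁱ [v₀,…,v̂ᵢ,…,vₙ]`;
in the alternating-function encoding this is `(∂c) g = Σ_{v} c (v ∷ g)`. -/
def bdry {V : Type*} [Fintype V] {n : ℕ} {R : Type*} [AddCommMonoid R]
    (c : (Fin (n + 1) → V) → R) : (Fin n → V) → R :=
  fun g => ∑ v : V, c (Fin.cons v g)

/-- 1-norm of an integral chain: sum of the absolute values of the coefficients,
one per oriented simplex (each simplex has `(n+1)!` tuple representatives). -/
noncomputable def normZ {V : Type*} [Fintype V] [DecidableEq V] {n : ℕ}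
    (c : (Fin (n + 1) → V) → ℤ) : ℝ :=
  (∑ f : Fin (n + 1) → V, |(c f : ℝ)|) / (Nat.factorial (n + 1) : ℝ)

/-- 1-norm of a rational chain. -/
noncomputable def normQ {V : Type*} [Fintype V] [DecidableEq V] {n : ℕ}
    (c : (Fin (n + 1) → V) → ℚ) : ℝ :=
  (∑ f : Fin (n + 1) → V, |(c f : ℝ)|) / (Nat.factorial (n + 1) : ℝ)

/-- An admissible `d`-complex on `V`: an integral `d`-chain in which every oriented
`d`-simplex appears with coefficient `0` or `1` (i.e. every tuple has coefficient
`-1`, `0` or `1`), and whose boundary vanishes. Its *facets* are the oriented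
simplices (tuples) with coefficient `1`. -/
structure IsAdmissible {V : Type*} [Fintype V] (d : ℕ)
    (K : (Fin (d + 1) → V) → ℤ) : Prop where
  chain : IsAltChain d K
  coeff : ∀ f, K f = -1 ∨ K f = 0 ∨ K f = 1
  closed : ∀ g, bdry K g = 0

/-- `V_ℤ(K)`: the minimum 1-norm of an integral `(d+1)`-chain `α` with `∂α = K`
(the minimum is attained, so it equals this infimum). -/
noncomputable def VZ {V : Type*} [Fintype V] [DecidableEq V] (d : ℕ)
    (K : (Fin (d + 1) → V) → ℤ) : ℝ :=
  sInf { x : ℝ | ∃ α : (Fin (d + 2) → V) → ℤ,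
    IsAltChain (d + 1) α ∧ (∀ g, bdry α g = K g) ∧ x = normZ α }

/-- `V_ℚ(K)`: the minimum 1-norm of a rational `(d+1)`-chain `α` with `∂α = K`
(the minimum is attained, so it equals this infimum). -/
noncomputable def VQ {V : Type*} [Fintype V] [DecidableEq V] (d : ℕ)
    (K : (Fin (d + 1) → V) → ℤ) : ℝ :=
  sInf { x : ℝ | ∃ α : (Fin (d + 2) → V) → ℚ,
    IsAltChain (d + 1) α ∧ (∀ g, bdry α g = (K g : ℚ)) ∧ x = normQ α }

/-- The unit-flux constraint: for every oriented `(d+1)`-simplex `t` on `V`,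
the total flux through its oriented boundary facets is at most `1`. -/
def UnitFlux {V : Type*} (d : ℕ) (φ : (Fin (d + 1) → V) → ℝ) : Prop :=
  ∀ t : Fin (d + 2) → V, Function.Injective t →
    ∑ i : Fin (d + 2), (-1 : ℝ) ^ (i : ℕ) * φ (t ∘ i.succAbove) ≤ 1

/-- `φ(F₁) + ⋯ + φ(Fₙ)`, the sum of a flux function over the facets of `K`
(each facet has `(d+1)!` tuple representatives `f`, on which `K f * φ f` agree). -/
noncomputable def fluxSum {V : Type*} [Fintype V] (d : ℕ)
    (φ : (Fin (d + 1) → V) → ℝ) (K : (Fin (d + 1) → V) → ℤ) : ℝ :=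
  (∑ f : Fin (d + 1) → V, (K f : ℝ) * φ f) / (Nat.factorial (d + 1) : ℝ)

/-- Pushforward of a chain along a map of vertex sets `q : V → W`
(simplices whose image is degenerate die). -/
def pushChain {V W : Type*} [Fintype V] [DecidableEq W] (q : V → W) {n : ℕ}
    {R : Type*} [AddCommMonoid R] (c : (Fin n → V) → R) : (Fin n → W) → R :=
  fun f => ∑ g : Fin n → V, if q ∘ g = f then c g else 0

/-- The chain consisting of the single oriented simplex `[s 0, …, s n]`. -/
def simplexChain {V : Type*} [DecidableEq V] {n : ℕ} (s : Fin (n + 1) → V) :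
    (Fin (n + 1) → V) → ℤ :=
  fun f => ∑ σ : Equiv.Perm (Fin (n + 1)),
    if f = s ∘ σ then (Equiv.Perm.sign σ : ℤ) else 0

/-- The chain of the disjoint union `K ⊔ K'` on `V ⊕ V'`: it is `K + K'`. -/
def unionChain {V V' : Type*} [Fintype V] [Fintype V'] [DecidableEq V] [DecidableEq V']
    {n : ℕ} (K : (Fin n → V) → ℤ) (K' : (Fin n → V') → ℤ) : (Fin n → V ⊕ V') → ℤ :=
  fun f => pushChain Sum.inl K f + pushChain Sum.inr K' f

/-- The chain of the connected sum `K # K'` on the glued vertex set `W`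
(with gluing maps `j : V → W`, `j' : V' → W` identifying the facet `vF` of `K`
with the facet `vF'` of `K'`): the image of `K + K' − F − F'` under the gluing. -/
def connSum {V V' W : Type*} [Fintype V] [Fintype V'] [DecidableEq V] [DecidableEq V']
    [DecidableEq W] {d : ℕ} (K : (Fin (d + 1) → V) → ℤ) (K' : (Fin (d + 1) → V') → ℤ)
    (vF : Fin (d + 1) → V) (vF' : Fin (d + 1) → V') (j : V → W) (j' : V' → W) :
    (Fin (d + 1) → W) → ℤ :=
  pushChain (Sum.elim j j')
    (fun g : Fin (d + 1) → V ⊕ V' =>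
      pushChain Sum.inl K g + pushChain Sum.inr K' g
        - pushChain Sum.inl (simplexChain vF) g - pushChain Sum.inr (simplexChain vF') g)

section Aux

lemma alt_zero_of_not_inj {V : Type*} {n : ℕ} {c : (Fin (n + 1) → V) → ℤ}
    (hc : IsAltChain n c) {f : Fin (n + 1) → V} (hf : ¬ Function.Injective f) :
    c f = 0 := by
  simp only [Function.Injective, not_forall] at hf
  obtain ⟨i, j, hij, hne⟩ := hf
  have hfσ : f ∘ (Equiv.swap i j) = f := by
    funext x
    rcases eq_or_ne x i with rfl | hxi
    · simp [Equiv.swap_apply_left, hij]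
    rcases eq_or_ne x j with rfl | hxj
    · simp [Equiv.swap_apply_right, hij]
    · simp [Equiv.swap_apply_of_ne_of_ne hxi hxj]
  have h := hc (Equiv.swap i j) f
  rw [hfσ, Equiv.Perm.sign_swap hne] at h
  simp only [Units.val_neg, Units.val_one, smul_eq_mul, neg_mul, one_mul] at h
  omega

lemma comp_perm_eq_iff {A : Type*} {m : ℕ} (σ : Equiv.Perm (Fin m)) (a b : Fin m → A) :
    a ∘ σ = b ↔ a = b ∘ σ.symm := by
  constructor
  · intro h; funext x
    have := congrFun h (σ.symm x); simpa using this
  · intro h; funext x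
    have := congrFun h (σ x); simp [h]

lemma isAltChain_pushChain {V W : Type*} [Fintype V] [DecidableEq W] {n : ℕ}
    (q : V → W) {c : (Fin (n + 1) → V) → ℤ} (hc : IsAltChain n c) :
    IsAltChain n (pushChain q c) := by
  intro σ f
  unfold pushChain
  rw [Finset.smul_sum]
  apply Fintype.sum_equiv (Equiv.arrowCongr (σ : Fin (n+1) ≃ Fin (n+1)) (Equiv.refl V))
  intro g
  have he : (Equiv.arrowCongr (σ : Fin (n+1) ≃ Fin (n+1)) (Equiv.refl V)) g
      = g ∘ σ.symm := rfl
  rw [he]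
  have hcond : (q ∘ g = f ∘ σ) ↔ (q ∘ (g ∘ σ.symm) = f) := by
    rw [show q ∘ (g ∘ σ.symm) = (q ∘ g) ∘ (σ.symm : Equiv.Perm (Fin (n+1))) from rfl,
      comp_perm_eq_iff σ.symm (q ∘ g) f]
    simp
  have hval : c (g ∘ (σ.symm : Equiv.Perm (Fin (n+1)))) =
      ((Equiv.Perm.sign σ.symm : ℤ)) • c g := hc σ.symm g
  by_cases h : q ∘ g = f ∘ σ
  · rw [if_pos h, if_pos (hcond.mp h), hval]
    have hs : (Equiv.Perm.sign σ.symm : ℤ) = (Equiv.Perm.sign σ : ℤ) := by simp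
    rw [hs, smul_smul]
    have h1 : (Equiv.Perm.sign σ : ℤ) * (Equiv.Perm.sign σ : ℤ) = 1 := by
      rcases Int.units_eq_one_or (Equiv.Perm.sign σ) with h1 | h1 <;> simp [h1]
    rw [h1, one_smul]
  · rw [if_neg h, if_neg (fun hh => h (hcond.mpr hh))]
    simp

lemma pushChain_comp {V W X : Type*} [Fintype V] [Fintype W] [DecidableEq W]
    [DecidableEq X] {n : ℕ} (p : V → W) (q : W → X) (c : (Fin n → V) → ℤ)
    (f : Fin n → X) :
    pushChain q (pushChain p c) f = pushChain (q ∘ p) c f := by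
  unfold pushChain
  calc (∑ g : Fin n → W, if q ∘ g = f then ∑ h : Fin n → V,
          (if p ∘ h = g then c h else 0) else 0)
      = ∑ g : Fin n → W, ∑ h : Fin n → V,
          (if q ∘ g = f then (if p ∘ h = g then c h else 0) else 0) := by
        apply Finset.sum_congr rfl; intro g _
        split
        · rfl
        · simp
    _ = ∑ h : Fin n → V, ∑ g : Fin n → W,
          (if q ∘ g = f then (if p ∘ h = g then c h else 0) else 0) :=
        Finset.sum_comm
    _ = ∑ h : Fin n → V, (if (q ∘ p) ∘ h = f then c h else 0) := by
        apply Finset.sum_congr rfl; intro h _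
        rw [Finset.sum_eq_single (p ∘ h)]
        · simp [Function.comp_assoc]
        · intro b _ hb
          simp [Ne.symm hb]
        · intro hb
          exact absurd (Finset.mem_univ _) hb

lemma bdry_pushChain {V W : Type*} [Fintype V] [Fintype W] [DecidableEq W] {n : ℕ}
    (q : V → W) (c : (Fin (n + 1) → V) → ℤ) (g : Fin n → W) :
    bdry (pushChain q c) g = pushChain q (bdry c) g := by
  unfold bdry pushChain
  rw [Finset.sum_comm]
  have lhs : (∑ y : Fin (n + 1) → V, ∑ x : W, if q ∘ y = Fin.cons x g then c y else 0)
      = ∑ y : Fin (n + 1) → V, (if q ∘ Fin.tail y = g then c y else 0) := by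
    apply Finset.sum_congr rfl; intro y _
    have hy : q ∘ y = Fin.cons (q (y 0)) (q ∘ Fin.tail y) := by
      conv_lhs => rw [← Fin.cons_self_tail y, Fin.comp_cons]
    calc (∑ x : W, if q ∘ y = Fin.cons x g then c y else 0)
        = ∑ x : W, if q (y 0) = x then (if q ∘ Fin.tail y = g then c y else 0) else 0 := by
          apply Finset.sum_congr rfl; intro x _
          rw [hy]
          by_cases h1 : q (y 0) = x
          · by_cases h2 : q ∘ Fin.tail y = g
            · rw [if_pos (by rw [h1, h2]), if_pos h1, if_pos h2]
            · rw [if_neg (by simp [Fin.cons_inj, h2]), if_pos h1, if_neg h2]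
          · rw [if_neg (by simp [Fin.cons_inj, h1]), if_neg h1]
      _ = _ := Fintype.sum_ite_eq _ _
  rw [lhs]
  have rhs : (∑ x : Fin n → V, if q ∘ x = g then ∑ v : V, c (Fin.cons v x) else 0)
      = ∑ p : V × (Fin n → V), (if q ∘ p.2 = g then c (Fin.cons p.1 p.2) else 0) := by
    rw [Fintype.sum_prod_type]
    rw [Finset.sum_comm]
    apply Finset.sum_congr rfl; intro x _
    split
    · rfl
    · simp
  rw [rhs]
  exact (Fintype.sum_equiv (Fin.consEquiv (fun _ => V))
    (fun p => if q ∘ p.2 = g then c (Fin.cons p.1 p.2) else 0)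
    (fun y => if q ∘ Fin.tail y = g then c y else 0)
    (fun p => by simp [Fin.consEquiv])).symm

end Aux

section Aux2

lemma sum_chain_eq_zero {V' : Type*} [Fintype V'] {d : ℕ}
    {K' : (Fin (d + 1) → V') → ℤ} (hcl : ∀ g, bdry K' g = 0) :
    ∑ g : Fin (d + 1) → V', K' g = 0 := by
  have h1 : ∑ p : V' × (Fin d → V'), K' (Fin.cons p.1 p.2)
      = ∑ g : Fin (d + 1) → V', K' g :=
    Fintype.sum_equiv (Fin.consEquiv (fun _ => V')) _ _ (fun p => rfl)
  rw [← h1, Fintype.sum_prod_type, Finset.sum_comm]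
  calc ∑ g' : Fin d → V', ∑ x : V', K' (Fin.cons x g')
      = ∑ g' : Fin d → V', bdry K' g' := rfl
    _ = 0 := by simp [hcl]

lemma pushChain_const_eq_zero {V' W : Type*} [Fintype V'] [DecidableEq W] {d : ℕ}
    {K' : (Fin (d + 1) → V') → ℤ} (hcl : ∀ g, bdry K' g = 0) (w : W)
    (f : Fin (d + 1) → W) : pushChain (fun _ => w) K' f = 0 := by
  unfold pushChain
  have hc : ∀ g : Fin (d + 1) → V',
      ((fun _ => w) ∘ g) = (fun _ : Fin (d + 1) => w) := fun g => rfl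
  have : (∑ g : Fin (d + 1) → V', if (fun _ : V' => w) ∘ g = f then K' g else 0)
      = ∑ g : Fin (d + 1) → V', if (fun _ : Fin (d + 1) => w) = f then K' g else 0 := by
    apply Finset.sum_congr rfl; intro g _; rw [hc g]
  rw [this]
  by_cases hP : (fun _ : Fin (d + 1) => w) = f
  · simp only [hP, if_pos rfl]
    simpa [hP] using sum_chain_eq_zero hcl
  · simp [hP]

lemma sum_abs_push_le {V W : Type*} [Fintype V] [Fintype W] [DecidableEq W] {n : ℕ}
    (q : V → W) {c : (Fin (n + 1) → V) → ℤ} (hc : IsAltChain n c)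
    (G : Finset (Fin (n + 1) → V))
    (hG : ∀ g, Function.Injective (q ∘ g) → g ∈ G) :
    ∑ f : Fin (n + 1) → W, |((pushChain q c f : ℤ) : ℝ)|
      ≤ ∑ g ∈ G, |((c g : ℤ) : ℝ)| := by
  have key : ∀ f : Fin (n + 1) → W, |((pushChain q c f : ℤ) : ℝ)|
      ≤ ∑ g ∈ G, (if q ∘ g = f then |((c g : ℤ) : ℝ)| else 0) := by
    intro f
    by_cases hinj : Function.Injective f
    · have hpc : pushChain q c f = ∑ g ∈ G, (if q ∘ g = f then c g else 0) := by
        unfold pushChain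
        refine (Finset.sum_subset (Finset.subset_univ G) ?_).symm
        intro x _ hx
        rw [if_neg]
        intro hqx
        refine hx (hG x ?_)
        rw [hqx]; exact hinj
      rw [hpc, Int.cast_sum]
      refine le_trans (Finset.abs_sum_le_sum_abs _ _) ?_
      apply Finset.sum_le_sum
      intro g _
      split <;> simp
    · rw [alt_zero_of_not_inj (isAltChain_pushChain q hc) hinj]
      simp only [Int.cast_zero, abs_zero]
      apply Finset.sum_nonneg
      intro g _
      split
      · positivity
      · exact le_refl 0
  refine le_trans (Finset.sum_le_sum (fun f _ => key f)) ?_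
  rw [Finset.sum_comm]
  apply le_of_eq
  apply Finset.sum_congr rfl
  intro g _
  exact Fintype.sum_ite_eq (q ∘ g) (fun _ => |((c g : ℤ) : ℝ)|)

end Aux2

/-- In any optimal integral decomposition of `K ⊔ K'`, every `(d+1)`-simplex with
nonzero coefficient lies entirely in `S`, entirely in `S'`, entirely in `S` except
for exactly one vertex in `S'`, or entirely in `S'` except for exactly one vertex
in `S`. -/
theorem stmt9 {V V' : Type*} [Fintype V] [DecidableEq V]
    [Fintype V'] [DecidableEq V'] (d : ℕ)
    (K : (Fin (d + 1) → V) → ℤ) (K' : (Fin (d + 1) → V') → ℤ)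
    (hK : IsAdmissible d K) (hK' : IsAdmissible d K')
    (α : (Fin (d + 2) → V ⊕ V') → ℤ) (hα : IsAltChain (d + 1) α)
    (hbdry : ∀ g, bdry α g = unionChain K K' g)
    (hopt : normZ α = VZ d (unionChain K K')) :
    ∀ t : Fin (d + 2) → V ⊕ V', α t ≠ 0 →
      (∀ i, ∃ v, t i = Sum.inl v) ∨ (∀ i, ∃ v', t i = Sum.inr v') ∨
      (∃! i, ∃ v', t i = Sum.inr v') ∨ (∃! i, ∃ v, t i = Sum.inl v) := by
  classical
  intro t ht
  set cnt : (Fin (d + 2) → V ⊕ V') → ℕ :=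
    fun g => (Finset.univ.filter fun i => (g i).isRight = true).card with hcnt
  have hcards : ∀ g : Fin (d + 2) → V ⊕ V',
      cnt g + (Finset.univ.filter fun i => ¬ (g i).isRight = true).card = d + 2 := by
    intro g
    have := Finset.card_filter_add_card_filter_not
      (s := (Finset.univ : Finset (Fin (d + 2)))) (p := fun i => (g i).isRight = true)
    simpa [hcnt] using this
  have hk4 : cnt t ≤ d + 2 := by
    have := hcards t; omega
  have hmid : ¬ (2 ≤ cnt t ∧ cnt t ≤ d) := by
    rintro ⟨h2, hdk⟩
    -- get a vertex v' : V'
    obtain ⟨i₀, hi₀⟩ : ∃ i, (t i).isRight = true := by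
      have hpos : 0 < cnt t := by omega
      obtain ⟨i, hi⟩ := Finset.card_pos.mp hpos
      exact ⟨i, (Finset.mem_filter.mp hi).2⟩
    obtain ⟨v', hv'⟩ : ∃ v', t i₀ = Sum.inr v' := by
      cases h : t i₀ with
      | inl a => rw [h] at hi₀; simp at hi₀
      | inr b => exact ⟨b, rfl⟩
    -- get a vertex v : V
    obtain ⟨j₀, hj₀⟩ : ∃ j, ¬ (t j).isRight = true := by
      have hpos : 0 < (Finset.univ.filter fun i => ¬ (t i).isRight = true).card := by
        have := hcards t; omega
      obtain ⟨j, hj⟩ := Finset.card_pos.mp hpos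
      exact ⟨j, (Finset.mem_filter.mp hj).2⟩
    obtain ⟨v, hv⟩ : ∃ v, t j₀ = Sum.inl v := by
      cases h : t j₀ with
      | inl a => exact ⟨a, rfl⟩
      | inr b => rw [h] at hj₀; simp at hj₀
    set u : V ⊕ V' → V ⊕ V' := Sum.elim Sum.inl (fun _ => Sum.inl v) with hu
    set u' : V ⊕ V' → V ⊕ V' := Sum.elim (fun _ => Sum.inr v') Sum.inr with hu'
    set β : (Fin (d + 2) → V ⊕ V') → ℤ :=
      fun f => pushChain u α f + pushChain u' α f with hβ
    have hβalt : IsAltChain (d + 1) β := by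
      intro σ f
      simp only [hβ]
      rw [isAltChain_pushChain u hα σ f, isAltChain_pushChain u' hα σ f, smul_add]
    have hβbdry : ∀ g, bdry β g = unionChain K K' g := by
      intro g
      have hsplit : bdry β g = bdry (pushChain u α) g + bdry (pushChain u' α) g := by
        unfold bdry; rw [← Finset.sum_add_distrib]
      rw [hsplit, bdry_pushChain, bdry_pushChain]
      have hbd : bdry α = unionChain K K' := funext hbdry
      rw [hbd]
      have hadd : ∀ (w : V ⊕ V' → V ⊕ V') (g : Fin (d + 1) → V ⊕ V'),
          pushChain w (unionChain K K') g
            = pushChain w (pushChain Sum.inl K) g + pushChain w (pushChain Sum.inr K') g := by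
        intro w g
        unfold unionChain pushChain
        rw [← Finset.sum_add_distrib]
        apply Finset.sum_congr rfl; intro x _
        split
        · rfl
        · simp
      rw [hadd u g, hadd u' g, pushChain_comp, pushChain_comp, pushChain_comp,
        pushChain_comp]
      have e1 : u ∘ Sum.inl = (Sum.inl : V → V ⊕ V') := rfl
      have e2 : u ∘ Sum.inr = (fun _ : V' => (Sum.inl v : V ⊕ V')) := rfl
      have e3 : u' ∘ Sum.inl = (fun _ : V => (Sum.inr v' : V ⊕ V')) := rfl
      have e4 : u' ∘ Sum.inr = (Sum.inr : V' → V ⊕ V') := rfl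
      rw [e1, e2, e3, e4, pushChain_const_eq_zero hK'.closed,
        pushChain_const_eq_zero hK.closed]
      show pushChain Sum.inl K g + 0 + (0 + pushChain Sum.inr K' g) = unionChain K K' g
      unfold unionChain
      ring
    have hbdd : BddBelow { x : ℝ | ∃ γ : (Fin (d + 2) → V ⊕ V') → ℤ,
        IsAltChain (d + 1) γ ∧ (∀ g, bdry γ g = unionChain K K' g) ∧ x = normZ γ } := by
      refine ⟨0, ?_⟩
      rintro x ⟨γ, _, _, rfl⟩
      unfold normZ
      positivity
    have hmem : normZ β ∈ { x : ℝ | ∃ γ : (Fin (d + 2) → V ⊕ V') → ℤ,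
        IsAltChain (d + 1) γ ∧ (∀ g, bdry γ g = unionChain K K' g) ∧ x = normZ γ } :=
      ⟨β, hβalt, hβbdry, rfl⟩
    have hle : normZ α ≤ normZ β := by
      rw [hopt]
      exact csInf_le hbdd hmem
    have hsum : (∑ f : Fin (d + 2) → V ⊕ V', |((α f : ℤ) : ℝ)|)
        ≤ ∑ f : Fin (d + 2) → V ⊕ V', |((β f : ℤ) : ℝ)| := by
      unfold normZ at hle
      have hFpos : (0 : ℝ) < (Nat.factorial (d + 1 + 1) : ℝ) := by positivity
      rw [div_le_div_iff₀ hFpos hFpos] at hle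
      exact le_of_mul_le_mul_right hle hFpos
    -- the two collapse bounds
    set G₁ : Finset (Fin (d + 2) → V ⊕ V') :=
      Finset.univ.filter (fun g => cnt g ≤ 1) with hG₁
    set G₂ : Finset (Fin (d + 2) → V ⊕ V') :=
      Finset.univ.filter (fun g => d + 1 ≤ cnt g) with hG₂
    have hb1 : ∑ f : Fin (d + 2) → V ⊕ V', |((pushChain u α f : ℤ) : ℝ)|
        ≤ ∑ g ∈ G₁, |((α g : ℤ) : ℝ)| := by
      refine sum_abs_push_le u hα G₁ ?_
      intro g hg
      simp only [hG₁, Finset.mem_filter, Finset.mem_univ, true_and]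
      by_contra hc2
      push_neg at hc2
      obtain ⟨i, hi, j, hj, hij⟩ := Finset.one_lt_card.mp hc2
      obtain ⟨a, ha⟩ := Sum.isRight_iff.mp (Finset.mem_filter.mp hi).2
      obtain ⟨b, hb⟩ := Sum.isRight_iff.mp (Finset.mem_filter.mp hj).2
      refine hij (hg ?_)
      show u (g i) = u (g j)
      rw [ha, hb, hu]
      rfl
    have hb2 : ∑ f : Fin (d + 2) → V ⊕ V', |((pushChain u' α f : ℤ) : ℝ)|
        ≤ ∑ g ∈ G₂, |((α g : ℤ) : ℝ)| := by
      refine sum_abs_push_le u' hα G₂ ?_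
      intro g hg
      simp only [hG₂, Finset.mem_filter, Finset.mem_univ, true_and]
      by_contra hc2
      push_neg at hc2
      have hcg : cnt g + (Finset.univ.filter fun i => ¬ (g i).isRight = true).card
          = d + 2 := hcards g
      have hneg : 1 < (Finset.univ.filter fun i => ¬ (g i).isRight = true).card := by
        omega
      obtain ⟨i, hi, j, hj, hij⟩ := Finset.one_lt_card.mp hneg
      have hli := (Finset.mem_filter.mp hi).2
      have hlj := (Finset.mem_filter.mp hj).2
      obtain ⟨a, ha⟩ : ∃ a, g i = Sum.inl a := by
        cases h : g i with
        | inl x => exact ⟨x, rfl⟩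
        | inr y => rw [h] at hli; simp at hli
      obtain ⟨b, hb⟩ : ∃ b, g j = Sum.inl b := by
        cases h : g j with
        | inl x => exact ⟨x, rfl⟩
        | inr y => rw [h] at hlj; simp at hlj
      refine hij (hg ?_)
      show u' (g i) = u' (g j)
      rw [ha, hb, hu']
      rfl
    have hβle : ∑ f : Fin (d + 2) → V ⊕ V', |((β f : ℤ) : ℝ)|
        ≤ (∑ g ∈ G₁, |((α g : ℤ) : ℝ)|) + ∑ g ∈ G₂, |((α g : ℤ) : ℝ)| := by
      refine le_trans ?_ (add_le_add hb1 hb2)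
      rw [← Finset.sum_add_distrib]
      apply Finset.sum_le_sum
      intro f _
      simp only [hβ]
      push_cast
      exact abs_add_le _ _
    have hdisj : Disjoint G₁ G₂ := by
      rw [Finset.disjoint_left]
      intro a ha hb
      simp only [hG₁, hG₂, Finset.mem_filter, Finset.mem_univ, true_and] at ha hb
      omega
    have htnotin : t ∉ G₁ ∪ G₂ := by
      simp only [Finset.mem_union, hG₁, hG₂, Finset.mem_filter, Finset.mem_univ, true_and]
      omega
    have hsub : (∑ g ∈ G₁ ∪ G₂, |((α g : ℤ) : ℝ)|)
        ≤ ∑ g ∈ Finset.univ.erase t, |((α g : ℤ) : ℝ)| := by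
      apply Finset.sum_le_sum_of_subset_of_nonneg
      · intro x hx
        exact Finset.mem_erase.mpr ⟨fun hxt => htnotin (hxt ▸ hx), Finset.mem_univ x⟩
      · intro _ _ _; positivity
    have herase : (∑ g ∈ Finset.univ.erase t, |((α g : ℤ) : ℝ)|) + |((α t : ℤ) : ℝ)|
        = ∑ g : Fin (d + 2) → V ⊕ V', |((α g : ℤ) : ℝ)| :=
      Finset.sum_erase_add _ _ (Finset.mem_univ t)
    have hunion : (∑ g ∈ G₁, |((α g : ℤ) : ℝ)|) + ∑ g ∈ G₂, |((α g : ℤ) : ℝ)|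
        = ∑ g ∈ G₁ ∪ G₂, |((α g : ℤ) : ℝ)| := (Finset.sum_union hdisj).symm
    have habs : |((α t : ℤ) : ℝ)| ≤ 0 := by linarith
    have : α t = 0 := by
      have h0 : |((α t : ℤ) : ℝ)| = 0 := le_antisymm habs (abs_nonneg _)
      have := abs_eq_zero.mp h0
      exact_mod_cast this
    exact ht this
  -- classification
  rcases (show cnt t = 0 ∨ cnt t = 1 ∨ cnt t = d + 1 ∨ cnt t = d + 2 by omega)
    with h0 | h1 | hd1 | hd2'
  · left
    intro i
    have hnot : i ∉ Finset.univ.filter fun i => (t i).isRight = true := by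
      rw [Finset.card_eq_zero.mp h0]
      exact Finset.notMem_empty i
    simp only [Finset.mem_filter, Finset.mem_univ, true_and] at hnot
    cases h : t i with
    | inl a => exact ⟨a, rfl⟩
    | inr b => rw [h] at hnot; simp at hnot
  · right; right; left
    obtain ⟨a, ha⟩ := Finset.card_eq_one.mp h1
    refine ⟨a, ?_, ?_⟩
    · have hmem : a ∈ Finset.univ.filter fun i => (t i).isRight = true :=
        ha ▸ Finset.mem_singleton_self a
      have hra := (Finset.mem_filter.mp hmem).2
      cases h : t a with
      | inl x => rw [h] at hra; simp at hra
      | inr y => exact ⟨y, h⟩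
    · rintro y ⟨w, hw⟩
      have hmem : y ∈ Finset.univ.filter fun i => (t i).isRight = true := by
        simp [Finset.mem_filter, hw]
      rw [ha] at hmem
      exact Finset.mem_singleton.mp hmem
  · right; right; right
    have hone : (Finset.univ.filter fun i => ¬ (t i).isRight = true).card = 1 := by
      have := hcards t; omega
    obtain ⟨a, ha⟩ := Finset.card_eq_one.mp hone
    refine ⟨a, ?_, ?_⟩
    · have hmem : a ∈ Finset.univ.filter fun i => ¬ (t i).isRight = true :=
        ha ▸ Finset.mem_singleton_self a
      have hra := (Finset.mem_filter.mp hmem).2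
      cases h : t a with
      | inl x => exact ⟨x, h⟩
      | inr y => rw [h] at hra; simp at hra
    · rintro y ⟨w, hw⟩
      have hmem : y ∈ Finset.univ.filter fun i => ¬ (t i).isRight = true := by
        simp [Finset.mem_filter, hw]
      rw [ha] at hmem
      exact Finset.mem_singleton.mp hmem
  · right; left
    intro i
    have huniv : (Finset.univ.filter fun i => (t i).isRight = true)
        = (Finset.univ : Finset (Fin (d + 2))) :=
      Finset.eq_univ_of_card _ (by
        rw [show (Finset.univ.filter fun i => (t i).isRight = true).card = cnt t from rfl,
          hd2']
        simp)
    have hmem : i ∈ Finset.univ.filter fun i => (t i).isRight = true := by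
      rw [huniv]; exact Finset.mem_univ i
    have hra := (Finset.mem_filter.mp hmem).2
    cases h : t i with
    | inl x => rw [h] at hra; simp at hra
    | inr y => exact ⟨y, rfl⟩
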